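/- Let μ be a measure on a measurable space X, let γ, β > 0 and let M be a positive integer. Let 𝒬 be a finite collection of pairwise disjoint measurable subsets of X with μ(q) ≥ γ for every q ∈ 𝒬. Let 𝕎 be a finite collection of pairs (T, T′) of subsets of X such that for each pair: T ⊆ T′, T′ is measurable with μ(T′) ≤ β, and every q ∈ 𝒬 with q ∩ T ≠ ∅ satisfies q ⊆ T′. Assume that every q ∈ 𝒬 intersects T for at least M of the pairs (T, T′) ∈ 𝕎. Then γ · M · |𝒬| ≤ β · |𝕎|. -/
import Mathlib


open MeasureTheory

open scoped Classical ENNReal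

/-- **Abstract double-counting estimate** underlying the bound
`μ₂(Y_{γ,M}) ≲ |𝕎| r^{-1/2+100δ} / M`: if `𝒬` is a finite family of pairwise
disjoint measurable sets each of measure at least `γ`, and `𝕎` a finite family
of pairs `(T, T')` with `T ⊆ T'`, `μ T' ≤ β`, such that every `q ∈ 𝒬` meeting
`T` is contained in `T'`, and every `q ∈ 𝒬` meets `T` for at least `M` of the
pairs in `𝕎`, then `γ · M · |𝒬| ≤ β · |𝕎|`. -/
theorem double_counting_squares_tubes
    {X : Type*} [MeasurableSpace X] (μ : Measure X)
    (γ β : ℝ) (hγ : 0 < γ) (hβ : 0 < β) (M : ℕ) (hM : 0 < M)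
    (𝒬 : Finset (Set X)) (𝕎 : Finset (Set X × Set X))
    (hQmeas : ∀ q ∈ 𝒬, MeasurableSet q)
    (hQdisj : ∀ q ∈ 𝒬, ∀ q' ∈ 𝒬, q ≠ q' → Disjoint q q')
    (hQγ : ∀ q ∈ 𝒬, ENNReal.ofReal γ ≤ μ q)
    (hWsub : ∀ w ∈ 𝕎, w.1 ⊆ w.2)
    (hWmeas : ∀ w ∈ 𝕎, MeasurableSet w.2)
    (hWβ : ∀ w ∈ 𝕎, μ w.2 ≤ ENNReal.ofReal β)
    (hWcontain : ∀ w ∈ 𝕎, ∀ q ∈ 𝒬, (q ∩ w.1).Nonempty → q ⊆ w.2)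
    (hQM : ∀ q ∈ 𝒬, M ≤ (𝕎.filter fun w => (q ∩ w.1).Nonempty).card) :
    γ * M * 𝒬.card ≤ β * 𝕎.card := by
  -- key: for each w, γ * (number of q meeting w.1) ≤ β
  have key : ∀ w ∈ 𝕎, γ * ((𝒬.filter fun q => (q ∩ w.1).Nonempty).card : ℝ) ≤ β := by
    intro w hw
    set S := 𝒬.filter fun q => (q ∩ w.1).Nonempty with hS
    have hsum : (S.card : ℝ≥0∞) * ENNReal.ofReal γ ≤ ∑ q ∈ S, μ q := by
      calc (S.card : ℝ≥0∞) * ENNReal.ofReal γ = ∑ _q ∈ S, ENNReal.ofReal γ := by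
            simp [Finset.sum_const, mul_comm]
        _ ≤ ∑ q ∈ S, μ q := Finset.sum_le_sum fun q hq =>
            hQγ q (Finset.mem_filter.mp hq).1
    have heq : ∑ q ∈ S, μ q = μ (⋃ q ∈ S, q) := by
      refine (measure_biUnion_finset ?_ ?_).symm
      · intro q hq q' hq' hne
        exact hQdisj q (Finset.mem_filter.mp hq).1 q' (Finset.mem_filter.mp hq').1 hne
      · intro q hq
        exact hQmeas q (Finset.mem_filter.mp hq).1
    have hsub : (⋃ q ∈ S, q) ⊆ w.2 := by
      intro x hx
      simp only [Set.mem_iUnion] at hx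
      obtain ⟨q, hq, hxq⟩ := hx
      have hq' := Finset.mem_filter.mp hq
      exact hWcontain w hw q hq'.1 hq'.2 hxq
    have : (S.card : ℝ≥0∞) * ENNReal.ofReal γ ≤ ENNReal.ofReal β :=
      hsum.trans (heq.le.trans ((measure_mono hsub).trans (hWβ w hw)))
    have h2 : ENNReal.ofReal (γ * S.card) ≤ ENNReal.ofReal β := by
      rw [ENNReal.ofReal_mul hγ.le]
      rw [mul_comm] at this
      simpa using this
    have := (ENNReal.ofReal_le_ofReal_iff hβ.le).mp h2
    linarith
  -- double counting
  have swap : ∑ q ∈ 𝒬, ((𝕎.filter fun w => (q ∩ w.1).Nonempty).card : ℝ)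
      = ∑ w ∈ 𝕎, ((𝒬.filter fun q => (q ∩ w.1).Nonempty).card : ℝ) := by
    simp only [Finset.card_filter]
    push_cast
    rw [Finset.sum_comm]
  calc γ * M * 𝒬.card = ∑ _q ∈ 𝒬, γ * M := by
        rw [Finset.sum_const, nsmul_eq_mul]; ring
    _ ≤ ∑ q ∈ 𝒬, γ * ((𝕎.filter fun w => (q ∩ w.1).Nonempty).card : ℝ) := by
        refine Finset.sum_le_sum fun q hq => ?_
        have := hQM q hq
        have : (M : ℝ) ≤ ((𝕎.filter fun w => (q ∩ w.1).Nonempty).card : ℝ) := by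
          exact_mod_cast this
        nlinarith
    _ = γ * ∑ q ∈ 𝒬, ((𝕎.filter fun w => (q ∩ w.1).Nonempty).card : ℝ) := by
        rw [Finset.mul_sum]
    _ = ∑ w ∈ 𝕎, γ * ((𝒬.filter fun q => (q ∩ w.1).Nonempty).card : ℝ) := by
        rw [swap, Finset.mul_sum]
    _ ≤ ∑ _w ∈ 𝕎, β := Finset.sum_le_sum fun w hw => key w hw
    _ = β * 𝕎.card := by rw [Finset.sum_const, nsmul_eq_mul]; ring
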